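/- arXiv:1607.01155 — 7 statements merged into one kernel-verified Lean document; each statement's English description precedes it below -/
import Mathlib

section
/- Let A be an n×n complex matrix and B an n×m complex matrix. If for every nonzero λ ∈ ℂ the block matrix [λI − A, B] has rank n, then the image of A^n is contained in the image of the controllability matrix [B, AB, ..., A^{n−1}B]. -/
open Matrix Polynomial

/-- Controllability-type matrix `[B, AB, ..., A^{N-1}B]` indexed by `Fin N × Fin m`. -/
noncomputable def ctrbMatrix {n m : ℕ} (A : Matrix (Fin n) (Fin n) ℂ)
    (B : Matrix (Fin n) (Fin m) ℂ) (N : ℕ) : Matrix (Fin n) (Fin N × Fin m) ℂ :=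
  fun i p => (A ^ (p.1 : ℕ) * B) i p.2

/-- Cayley–Hamilton: `A ^ n` is a combination of lower powers. -/
lemma pow_card_eq_sum_lower {n : ℕ} (A : Matrix (Fin n) (Fin n) ℂ) :
    A ^ n = ∑ j ∈ Finset.range n, (-(A.charpoly.coeff j)) • A ^ j := by
  have h0 := A.aeval_self_charpoly
  have hd : A.charpoly.natDegree = n := by
    simpa using A.charpoly_natDegree_eq_dim
  rw [aeval_eq_sum_range' (n := n + 1) (by omega)] at h0
  rw [Finset.sum_range_succ] at h0
  have hc : A.charpoly.coeff n = 1 := by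
    have := A.charpoly_monic
    rw [Monic, leadingCoeff, hd] at this
    exact this
  rw [hc, one_smul] at h0
  have h1 := eq_neg_of_add_eq_zero_right h0
  rw [h1, ← Finset.sum_neg_distrib]
  simp [neg_smul]

/-- An endomorphism of a space of dimension at most `N` over `ℂ` such that
`lam • 1 - f` is surjective for every `lam ≠ 0` satisfies `f ^ N = 0`. -/
lemma pow_eq_zero_of_surj {N : ℕ} {Q : Type} [AddCommGroup Q] [Module ℂ Q]
    [FiniteDimensional ℂ Q]
    (hdim : Module.finrank ℂ Q ≤ N) (f : Module.End ℂ Q)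
    (hsurj : ∀ lam : ℂ, lam ≠ 0 → Function.Surjective (lam • (1 : Module.End ℂ Q) - f)) :
    f ^ N = 0 := by
  have hint : IsIntegral ℂ f := LinearMap.isIntegral f
  have hmon : (minpoly ℂ f).Monic := minpoly.monic hint
  have hsp : (minpoly ℂ f).Splits := IsAlgClosed.splits _
  have hroots : ∀ μ ∈ (minpoly ℂ f).roots, μ = 0 := by
    intro μ hμ
    by_contra hμ0
    have heig : f.HasEigenvalue μ :=
      Module.End.hasEigenvalue_iff_isRoot.mpr (isRoot_of_mem_roots hμ)
    obtain ⟨v, hv⟩ := heig.exists_hasEigenvector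
    have hinj : Function.Injective (μ • (1 : Module.End ℂ Q) - f) :=
      (LinearMap.injective_iff_surjective).mpr (hsurj μ hμ0)
    have : (μ • (1 : Module.End ℂ Q) - f) v = 0 := by
      simp [LinearMap.sub_apply, hv.apply_eq_smul]
    exact hv.2 (hinj (by simpa using this))
  set k := (minpoly ℂ f).natDegree with hk
  have hcard : Multiset.card (minpoly ℂ f).roots = k := (splits_iff_card_roots).mp hsp
  have hrepl : (minpoly ℂ f).roots = Multiset.replicate k 0 :=
    Multiset.eq_replicate.mpr ⟨hcard, hroots⟩
  have hXk : minpoly ℂ f = X ^ k := by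
    have := hsp.eq_prod_roots_of_monic hmon
    rw [hrepl] at this
    simpa [Multiset.map_replicate, Multiset.prod_replicate] using this
  have hfk : f ^ k = 0 := by
    have := minpoly.aeval ℂ f
    rw [hXk] at this
    simpa using this
  have hkN : k ≤ N := by
    have h1 : (minpoly ℂ f) ∣ LinearMap.charpoly f := LinearMap.minpoly_dvd_charpoly f
    have h2 := Polynomial.natDegree_le_of_dvd h1 (LinearMap.charpoly_monic f).ne_zero
    rw [LinearMap.charpoly_natDegree] at h2
    omega
  exact pow_eq_zero_of_le hkN hfk

lemma sum_mulVec'' {α n m : Type*} [Fintype m] [NonUnitalNonAssocSemiring α]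
    {ι : Type*} (t : Finset ι) (M : ι → Matrix n m α) (u : m → α) :
    (∑ i ∈ t, M i).mulVec u = ∑ i ∈ t, (M i).mulVec u := by
  ext j
  simp [Matrix.mulVec, dotProduct, Finset.sum_apply, Matrix.sum_apply, Finset.sum_mul]
  rw [Finset.sum_comm]

theorem stmt0 {n m : ℕ} (A : Matrix (Fin n) (Fin n) ℂ) (B : Matrix (Fin n) (Fin m) ℂ)
    (h : ∀ lam : ℂ, lam ≠ 0 →
      (Matrix.fromCols (lam • (1 : Matrix (Fin n) (Fin n) ℂ) - A) B).rank = n) :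
    LinearMap.range ((A ^ n).mulVecLin) ≤
      LinearMap.range ((ctrbMatrix A B n).mulVecLin) := by
  classical
  rcases Nat.eq_zero_or_pos n with hn0 | hn
  · subst hn0
    intro x _
    have hx0 : x = 0 := Subsingleton.elim x 0
    rw [hx0]; exact Submodule.zero_mem _
  set W := LinearMap.range ((ctrbMatrix A B n).mulVecLin) with hWdef
  -- expansion of the controllability matrix action
  have hexp : ∀ v : Fin n × Fin m → ℂ, (ctrbMatrix A B n).mulVec v
      = ∑ k : Fin n, (A ^ (k : ℕ) * B).mulVec (fun j => v (k, j)) := by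
    intro v
    ext i
    simp [ctrbMatrix, mulVec, dotProduct, Fintype.sum_prod_type, Finset.sum_apply]
  -- columns of each block are in W
  have hmem : ∀ (k : Fin n) (u : Fin m → ℂ), (A ^ (k : ℕ) * B).mulVec u ∈ W := by
    intro k u
    refine ⟨fun p => if p.1 = k then u p.2 else 0, ?_⟩
    ext i
    simp [ctrbMatrix, mulVecLin, mulVec, dotProduct, Fintype.sum_prod_type, Finset.sum_ite_eq,
      ite_mul, mul_ite]
  -- extend to exponents ≤ n (using Cayley–Hamilton for n itself)
  have hmem' : ∀ k : ℕ, k ≤ n → ∀ u : Fin m → ℂ, (A ^ k * B).mulVec u ∈ W := by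
    intro k hk u
    rcases lt_or_eq_of_le hk with hlt | heq
    · exact hmem ⟨k, hlt⟩ u
    · subst heq
      have hCH := pow_card_eq_sum_lower A
      have hmat : A ^ k * B = ∑ j ∈ Finset.range k, (-(A.charpoly.coeff j)) • (A ^ j * B) := by
        rw [hCH, Matrix.sum_mul]
        simp [smul_mul_assoc]
      rw [hmat, sum_mulVec'']
      refine Submodule.sum_mem _ fun j hj => ?_
      rw [Matrix.smul_mulVec]
      exact Submodule.smul_mem _ _ (hmem ⟨j, Finset.mem_range.mp hj⟩ u)
  -- W is invariant under A
  have hInv : W ≤ W.comap (A.mulVecLin) := by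
    rintro x ⟨v, rfl⟩
    simp only [Submodule.mem_comap, mulVecLin_apply]
    rw [hexp v]
    have : A.mulVec (∑ k : Fin n, (A ^ (k : ℕ) * B).mulVec fun j => v (k, j))
        = ∑ k : Fin n, (A ^ ((k : ℕ) + 1) * B).mulVec fun j => v (k, j) := by
      rw [show A.mulVec = A.mulVecLin from rfl, map_sum]
      refine Finset.sum_congr rfl fun k _ => ?_
      rw [mulVecLin_apply, Matrix.mulVec_mulVec, ← Matrix.mul_assoc, ← pow_succ']
    rw [this]
    exact Submodule.sum_mem _ fun k _ => hmem' ((k : ℕ) + 1) k.isLt _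
  -- pass to the quotient
  set f : Module.End ℂ ((Fin n → ℂ) ⧸ W) := W.mapQ W (A.mulVecLin) hInv with hf
  have hBmem : ∀ u : Fin m → ℂ, B.mulVec u ∈ W := by
    intro u
    have := hmem ⟨0, hn⟩ u
    simpa using this
  have hsurj : ∀ lam : ℂ, lam ≠ 0 →
      Function.Surjective (lam • (1 : Module.End ℂ ((Fin n → ℂ) ⧸ W)) - f) := by
    intro lam hlam q
    obtain ⟨x, rfl⟩ := W.mkQ_surjective q
    have hr := h lam hlam
    have htop : LinearMap.range
        ((fromCols (lam • (1 : Matrix (Fin n) (Fin n) ℂ) - A) B).mulVecLin) = ⊤ := by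
      apply Submodule.eq_top_of_finrank_eq
      rw [show Module.finrank ℂ
        (LinearMap.range ((fromCols (lam • (1 : Matrix (Fin n) (Fin n) ℂ) - A) B).mulVecLin))
        = (fromCols (lam • (1 : Matrix (Fin n) (Fin n) ℂ) - A) B).rank from rfl, hr,
        Module.finrank_fin_fun]
    obtain ⟨w, hw⟩ : ∃ w, (fromCols (lam • (1 : Matrix (Fin n) (Fin n) ℂ) - A) B).mulVec w
        = x := by
      have : x ∈ LinearMap.range
          ((fromCols (lam • (1 : Matrix (Fin n) (Fin n) ℂ) - A) B).mulVecLin) := by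
        rw [htop]; trivial
      exact this
    have hwelim : w = Sum.elim (w ∘ Sum.inl) (w ∘ Sum.inr) := by
      ext s; cases s <;> rfl
    rw [hwelim, fromCols_mulVec_sumElim] at hw
    refine ⟨W.mkQ (w ∘ Sum.inl), ?_⟩
    have h1 : (lam • (1 : Matrix (Fin n) (Fin n) ℂ) - A).mulVec (w ∘ Sum.inl)
        = lam • (w ∘ Sum.inl) - A.mulVec (w ∘ Sum.inl) := by
      rw [Matrix.sub_mulVec, Matrix.smul_mulVec, Matrix.one_mulVec]
    have h2 : W.mkQ x = W.mkQ ((lam • (1 : Matrix (Fin n) (Fin n) ℂ) - A).mulVec (w ∘ Sum.inl)) := by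
      rw [← hw, map_add]
      have : W.mkQ (B.mulVec (w ∘ Sum.inr)) = 0 := by
        rw [Submodule.mkQ_apply, Submodule.Quotient.mk_eq_zero]
        exact hBmem _
      rw [this, add_zero]
    rw [h2, h1, map_sub, LinearMap.map_smul]
    simp only [LinearMap.sub_apply, LinearMap.smul_apply, Module.End.one_apply, hf,
      Submodule.mkQ_apply, Submodule.mapQ_apply, mulVecLin_apply]
  have hdim : Module.finrank ℂ ((Fin n → ℂ) ⧸ W) ≤ n := by
    calc Module.finrank ℂ ((Fin n → ℂ) ⧸ W) ≤ Module.finrank ℂ (Fin n → ℂ) :=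
          Submodule.finrank_quotient_le W
      _ = n := Module.finrank_fin_fun ℂ
  have hfn : f ^ n = 0 := pow_eq_zero_of_surj hdim f hsurj
  rintro x ⟨y, rfl⟩
  have hpowlin : ∀ k : ℕ, (A ^ k).mulVecLin = (A.mulVecLin) ^ k := by
    intro k
    induction k with
    | zero => simp [Matrix.mulVecLin_one, Module.End.one_eq_id]
    | succ k ih => rw [pow_succ, pow_succ, Matrix.mulVecLin_mul, ih]; rfl
  have hcm : W ≤ W.comap ((A.mulVecLin) ^ n) := W.le_comap_pow_of_le_comap hInv n
  have hkey : W.mkQ ((A ^ n).mulVecLin y) = (f ^ n) (W.mkQ y) := by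
    rw [hf, ← Submodule.mapQ_pow W hInv n, Submodule.mkQ_apply, Submodule.mkQ_apply, Submodule.mapQ_apply, hpowlin n]
  rw [hfn] at hkey
  simp only [LinearMap.zero_apply] at hkey
  rw [Submodule.mkQ_apply, Submodule.Quotient.mk_eq_zero] at hkey
  exact hkey
end

section
/- Let A be an n×n complex matrix and B an n×m complex matrix. If the image of A^n is contained in the image of the controllability matrix [B, AB, ..., A^{n−1}B], then for every nonzero λ ∈ ℂ the block matrix [λI − A, B] has rank n. -/
open Matrix

/-!
This is the easy half of the Popov–Belevitch–Hautus test. A left null vector `x` of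
`[λI - A, B]` is a left eigenvector of `A` for `λ` with `x B = 0`, so `x A^k B = λ^k x B = 0`
for every `k`: `x` annihilates the controllability matrix, hence the columns of `A^n`, giving
`λ^n x = x A^n = 0`. As `λ ≠ 0`, `x = 0`, so the `n` rows of `[λI - A, B]` are independent.
-/

namespace Matrix

variable {ι κ R : Type*}

theorem rank_eq_card_of_vecMul_eq_zero [Fintype ι] [Fintype κ] [Field R] {M : Matrix ι κ R}
    (hM : ∀ x : ι → R, x ᵥ* M = 0 → x = 0) : M.rank = Fintype.card ι := by
  have hinj : Function.Injective Mᵀ.mulVecLin := by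
    rw [← LinearMap.ker_eq_bot, LinearMap.ker_eq_bot']
    intro x hx
    exact hM x (by rwa [← mulVec_transpose])
  rw [← rank_transpose, rank, LinearMap.finrank_range_of_inj hinj,
    Module.finrank_fintype_fun_eq_card]

theorem vecMul_fromCols_sub_eq_zero_iff [Fintype ι] [CommRing R] [DecidableEq ι]
    (A : Matrix ι ι R) (B : Matrix ι κ R) (c : R) (x : ι → R) :
    x ᵥ* fromCols (c • 1 - A) B = 0 ↔ x ᵥ* A = c • x ∧ x ᵥ* B = 0 := by
  rw [vecMul_fromCols, ← Sum.elim_zero_zero, Sum.elim_eq_iff, vecMul_sub, vecMul_smul, vecMul_one,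
    sub_eq_zero, eq_comm]

theorem vecMul_pow_of_vecMul_eq_smul [Fintype ι] [CommSemiring R] [DecidableEq ι]
    {A : Matrix ι ι R} {c : R} {x : ι → R} (hx : x ᵥ* A = c • x) (k : ℕ) :
    x ᵥ* A ^ k = c ^ k • x := by
  induction k with
  | zero => simp
  | succ k ih => rw [pow_succ, ← vecMul_vecMul, ih, smul_vecMul, hx, smul_smul, ← pow_succ]

theorem vecMul_eq_zero_of_range_le [Fintype ι] [Fintype κ] {ν : Type*} [Fintype ν]
    [DecidableEq ν] [CommSemiring R] {C : Matrix ι κ R} {D : Matrix ι ν R}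
    (hDC : LinearMap.range D.mulVecLin ≤ LinearMap.range C.mulVecLin) {x : ι → R}
    (hx : x ᵥ* C = 0) : x ᵥ* D = 0 := by
  ext j
  obtain ⟨w, hw⟩ := hDC ⟨Pi.single j 1, rfl⟩
  calc (x ᵥ* D) j = x ⬝ᵥ D *ᵥ Pi.single j 1 := by rw [mulVec_single_one]; rfl
    _ = x ⬝ᵥ C *ᵥ w := congrArg (x ⬝ᵥ ·) hw.symm
    _ = 0 := by rw [dotProduct_mulVec, hx, zero_dotProduct]

end Matrix

theorem vecMul_ctrbMatrix_eq_zero {n m : ℕ} {A : Matrix (Fin n) (Fin n) ℂ}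
    {B : Matrix (Fin n) (Fin m) ℂ} {x : Fin n → ℂ} (hx : ∀ k : ℕ, x ᵥ* (A ^ k * B) = 0)
    (N : ℕ) : x ᵥ* ctrbMatrix A B N = 0 := by
  funext p
  exact congrFun (hx p.1) p.2

theorem stmt1 {n m : ℕ} (A : Matrix (Fin n) (Fin n) ℂ) (B : Matrix (Fin n) (Fin m) ℂ)
    (h : LinearMap.range ((A ^ n).mulVecLin) ≤
      LinearMap.range ((ctrbMatrix A B n).mulVecLin)) :
    ∀ lam : ℂ, lam ≠ 0 →
      (Matrix.fromCols (lam • (1 : Matrix (Fin n) (Fin n) ℂ) - A) B).rank = n := by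
  intro lam hlam
  refine (rank_eq_card_of_vecMul_eq_zero fun x hx => ?_).trans (Fintype.card_fin n)
  obtain ⟨hA, hB⟩ := (vecMul_fromCols_sub_eq_zero_iff A B lam x).mp hx
  have hctrb : x ᵥ* ctrbMatrix A B n = 0 := by
    refine vecMul_ctrbMatrix_eq_zero (fun k => ?_) n
    rw [← vecMul_vecMul, vecMul_pow_of_vecMul_eq_smul hA, smul_vecMul, hB, smul_zero]
  have hAn : lam ^ n • x = 0 := by
    rw [← vecMul_pow_of_vecMul_eq_smul hA]
    exact vecMul_eq_zero_of_range_le h hctrb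
  exact (smul_eq_zero.mp hAn).resolve_left (pow_ne_zero n hlam)
end

section
/- Let A be an n×n complex matrix and B an n×m complex matrix. The condition "for all nonzero λ ∈ ℂ, rank [λI − A, B] = n" holds if and only if rank [B, AB, ..., A^{n−1}B] = rank [B, AB, ..., A^{n−1}B, A^n]. -/
/-!
Let `R = ⟨A | im B⟩` be the smallest `A`-invariant subspace containing `im B`; by Cayley–Hamilton
it is the column space of `[B, AB, ..., A^{n-1}B]`, so the rank equality says `im Aⁿ ⊆ R`, i.e. the
map `Ā` induced by `A` on `ℂⁿ ⧸ R` is nilpotent. Every subspace containing `im (λ - A)` is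
`A`-invariant, so `im (λ - A) + im B = ℂⁿ` iff `im (λ - A) + R = ℂⁿ`, iff `λ - Ā` is onto, iff `λ` is
not an eigenvalue of `Ā`. Over `ℂ`, `Ā` is nilpotent iff it has no nonzero eigenvalue.
-/

open Matrix

open Module Polynomial

theorem Submodule.mapQ_eq_zero_iff {R M M₂ : Type*} [Ring R] [AddCommGroup M] [Module R M]
    [AddCommGroup M₂] [Module R M₂] {p : Submodule R M} {q : Submodule R M₂} (g : M →ₗ[R] M₂)
    (hg : p ≤ q.comap g) : p.mapQ q g hg = 0 ↔ LinearMap.range g ≤ q := by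
  rw [← LinearMap.range_eq_bot, Submodule.range_mapQ, ← LinearMap.le_ker_iff_map,
    Submodule.ker_mkQ]

namespace Module.End

section Reachable

variable {R M : Type*} [Semiring R] [AddCommMonoid M] [Module R M] (f : End R M)
  (U : Submodule R M)

/-- The reachable subspace `⟨f | U⟩` of control theory: the smallest `f`-invariant submodule
containing `U`. -/
def reachableSubspace : Submodule R M := ⨆ k : ℕ, U.map (f ^ k)

variable {f U}

theorem map_pow_le_reachableSubspace (k : ℕ) : U.map (f ^ k) ≤ f.reachableSubspace U :=
  le_iSup (fun k : ℕ => U.map (f ^ k)) k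

theorem le_reachableSubspace : U ≤ f.reachableSubspace U := by
  simpa [one_eq_id] using map_pow_le_reachableSubspace (f := f) (U := U) 0

theorem reachableSubspace_le_comap :
    f.reachableSubspace U ≤ (f.reachableSubspace U).comap f := by
  rw [← Submodule.map_le_iff_le_comap, reachableSubspace, Submodule.map_iSup]
  refine iSup_le fun k => ?_
  rw [← Submodule.map_comp, ← mul_eq_comp, ← pow_succ']
  exact map_pow_le_reachableSubspace (k + 1)

theorem reachableSubspace_le {S : Submodule R M} (hU : U ≤ S) (hS : S ≤ S.comap f) :
    f.reachableSubspace U ≤ S := by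
  refine iSup_le fun k => ?_
  induction k with
  | zero => simpa [one_eq_id] using hU
  | succ k ih =>
    rw [pow_succ', mul_eq_comp, Submodule.map_comp]
    exact (Submodule.map_mono ih).trans (Submodule.map_le_iff_le_comap.mpr hS)

end Reachable

section SmulOneSub

variable {R M : Type*} [CommRing R] [AddCommGroup M] [Module R M] {f : End R M}

theorem le_comap_of_range_smul_one_sub_le (μ : R) {S : Submodule R M}
    (h : LinearMap.range (μ • 1 - f) ≤ S) : S ≤ S.comap f := fun x hx => by
  have : f x = μ • x - (μ • 1 - f) x := by simp
  rw [Submodule.mem_comap, this]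
  exact S.sub_mem (S.smul_mem μ hx) (h (LinearMap.mem_range_self _ x))

theorem range_smul_one_sub_sup_reachableSubspace (U : Submodule R M) (μ : R) :
    LinearMap.range (μ • 1 - f) ⊔ f.reachableSubspace U = LinearMap.range (μ • 1 - f) ⊔ U :=
  le_antisymm
    (sup_le le_sup_left (reachableSubspace_le le_sup_right
      (le_comap_of_range_smul_one_sub_le μ le_sup_left)))
    (sup_le_sup_left le_reachableSubspace _)

end SmulOneSub

variable {K V : Type*} [Field K] [AddCommGroup V] [Module K V] [FiniteDimensional K V]

theorem iSup_fin_map_pow_eq_reachableSubspace (f : End K V) (U : Submodule K V) {N : ℕ}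
    (hN : finrank K V ≤ N) : ⨆ k : Fin N, U.map (f ^ (k : ℕ)) = f.reachableSubspace U := by
  refine le_antisymm (iSup_le fun k => map_pow_le_reachableSubspace k) (iSup_le fun j => ?_)
  rw [f.pow_eq_aeval_mod_charpoly j]
  by_cases hp : X ^ j %ₘ f.charpoly = 0
  · simp [hp]
  have hdeg : (X ^ j %ₘ f.charpoly).natDegree < N :=
    (natDegree_lt_natDegree hp (degree_modByMonic_lt _ f.charpoly_monic)).trans_le
      (f.charpoly_natDegree.trans_le hN)
  rw [aeval_eq_sum_range' hdeg]
  rintro _ ⟨u, hu, rfl⟩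
  rw [LinearMap.sum_apply]
  refine Submodule.sum_mem _ fun i hi => ?_
  rw [LinearMap.smul_apply]
  exact Submodule.smul_mem _ _ (Submodule.mem_iSup_of_mem ⟨i, Finset.mem_range.mp hi⟩
    (Submodule.mem_map_of_mem hu))

theorem isNilpotent_iff_forall_hasEigenvalue [IsAlgClosed K] (f : End K V) :
    IsNilpotent f ↔ ∀ μ, f.HasEigenvalue μ → μ = 0 := by
  refine ⟨fun hf μ hμ => (hμ.isNilpotent_of_isNilpotent hf).eq_zero, fun h => ?_⟩
  obtain ⟨d, hroots⟩ : ∃ d, f.charpoly.roots = Multiset.replicate d 0 :=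
    ⟨_, Multiset.eq_replicate_card.mpr fun μ hμ =>
      h μ ((hasEigenvalue_iff_isRoot_charpoly f μ).mpr (isRoot_of_mem_roots hμ))⟩
  have hχ : f.charpoly = X ^ d := by
    rw [(IsAlgClosed.splits f.charpoly).eq_prod_roots_of_monic f.charpoly_monic, hroots,
      Multiset.map_replicate, Multiset.prod_replicate, map_zero, sub_zero]
  exact ⟨d, by simpa [hχ] using f.aeval_self_charpoly⟩

variable {f : End K V} {W : Submodule K V}

theorem sup_range_smul_one_sub_eq_top_iff (hW : W ≤ W.comap f) (μ : K) :
    LinearMap.range (μ • 1 - f) ⊔ W = ⊤ ↔ ¬ HasEigenvalue (W.mapQ W f hW) μ := by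
  have hμ : W ≤ W.comap (μ • 1 - f) := fun _ hx => W.sub_mem (W.smul_mem μ hx) (hW hx)
  have : algebraMap K (End K (V ⧸ W)) μ - W.mapQ W f hW = W.mapQ W (μ • 1 - f) hμ := by
    ext; simp
  rw [hasEigenvalue_iff_mem_spectrum, spectrum.mem_iff, not_not,
    LinearMap.isUnit_iff_range_eq_top, this, Submodule.range_mapQ, Submodule.map_mkQ_eq_top,
    sup_comm]

theorem isNilpotent_mapQ_iff (hW : W ≤ W.comap f) :
    IsNilpotent (W.mapQ W f hW) ↔ LinearMap.range (f ^ finrank K V) ≤ W := by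
  rw [← Submodule.mapQ_eq_zero_iff _ (W.le_comap_pow_of_le_comap hW _), W.mapQ_pow hW]
  refine ⟨fun hnil => ?_, fun h => ⟨_, h⟩⟩
  have : W.mapQ W f hW ^ finrank K (V ⧸ W) = 0 := by
    simpa [hnil.charpoly_eq_X_pow_finrank] using (W.mapQ W f hW).aeval_self_charpoly
  exact pow_eq_zero_of_le W.finrank_quotient_le this

theorem forall_sup_range_smul_one_sub_eq_top_iff [IsAlgClosed K] (hW : W ≤ W.comap f) :
    (∀ μ : K, μ ≠ 0 → LinearMap.range (μ • 1 - f) ⊔ W = ⊤) ↔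
      LinearMap.range (f ^ finrank K V) ≤ W := by
  simp only [sup_range_smul_one_sub_eq_top_iff hW, ← isNilpotent_mapQ_iff hW,
    isNilpotent_iff_forall_hasEigenvalue, ne_eq]
  exact forall_congr' fun _ => not_imp_not

end Module.End

namespace Matrix

theorem range_mulVecLin_fromCols {R m p q : Type*} [CommSemiring R] [Fintype p] [Fintype q]
    (M : Matrix m p R) (N : Matrix m q R) :
    LinearMap.range (fromCols M N).mulVecLin
      = LinearMap.range M.mulVecLin ⊔ LinearMap.range N.mulVecLin := by
  have hcol : (fromCols M N).col = Sum.elim M.col N.col := by ext (j | j) i <;> rfl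
  rw [range_mulVecLin, range_mulVecLin, range_mulVecLin, hcol, Set.Sum.elim_range,
    Submodule.span_union]

variable {K m p q : Type*} [Field K] [Fintype p] [Fintype q]

theorem rank_eq_rank_fromCols_iff (M : Matrix m p K) (N : Matrix m q K) :
    M.rank = (fromCols M N).rank ↔
      LinearMap.range N.mulVecLin ≤ LinearMap.range M.mulVecLin := by
  rw [rank, rank, range_mulVecLin_fromCols, ← sup_eq_left]
  exact ⟨fun h => (Submodule.eq_of_le_of_finrank_eq le_sup_left h).symm, fun h => by rw [h]⟩

theorem rank_eq_card_iff [Fintype m] (M : Matrix m p K) :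
    M.rank = Fintype.card m ↔ LinearMap.range M.mulVecLin = ⊤ := by
  rw [rank, ← Module.finrank_fintype_fun_eq_card (R := K), Submodule.eq_top_iff_finrank_eq]

end Matrix

theorem range_mulVecLin_ctrbMatrix {n m : ℕ} (A : Matrix (Fin n) (Fin n) ℂ)
    (B : Matrix (Fin n) (Fin m) ℂ) (N : ℕ) :
    LinearMap.range (ctrbMatrix A B N).mulVecLin
      = ⨆ k : Fin N, (LinearMap.range B.mulVecLin).map (A.toLin' ^ (k : ℕ)) := by
  have hcol : (ctrbMatrix A B N).col = fun kj => (A.toLin' ^ (kj.1 : ℕ)) (B.col kj.2) := by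
    ext kj i
    simp [ctrbMatrix, ← toLin'_pow, toLin'_apply, mul_apply, mulVec, dotProduct]
  simp only [range_mulVecLin, Submodule.map_span, ← Submodule.span_iUnion, hcol]
  congr 1
  ext v
  simp

theorem stmt2 {n m : ℕ} (A : Matrix (Fin n) (Fin n) ℂ) (B : Matrix (Fin n) (Fin m) ℂ) :
    (∀ lam : ℂ, lam ≠ 0 →
      (Matrix.fromCols (lam • (1 : Matrix (Fin n) (Fin n) ℂ) - A) B).rank = n) ↔
    (ctrbMatrix A B n).rank = (Matrix.fromCols (ctrbMatrix A B n) (A ^ n)).rank := by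
  set f : Module.End ℂ (Fin n → ℂ) := A.toLin'
  set R := f.reachableSubspace (LinearMap.range B.mulVecLin)
  have hR : LinearMap.range (ctrbMatrix A B n).mulVecLin = R := by
    rw [range_mulVecLin_ctrbMatrix,
      Module.End.iSup_fin_map_pow_eq_reachableSubspace _ _ (Module.finrank_fin_fun ℂ).le]
  have hPBH (lam : ℂ) : (fromCols (lam • (1 : Matrix (Fin n) (Fin n) ℂ) - A) B).rank = n ↔
      LinearMap.range (lam • 1 - f) ⊔ R = ⊤ := by
    have hrank := rank_eq_card_iff (fromCols (lam • (1 : Matrix (Fin n) (Fin n) ℂ) - A) B)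
    have hsub : (lam • (1 : Matrix (Fin n) (Fin n) ℂ) - A).mulVecLin = lam • 1 - f := by
      simp [f, ← toLin'_apply', Module.End.one_eq_id]
    rw [Fintype.card_fin] at hrank
    rw [hrank, range_mulVecLin_fromCols, hsub,
      Module.End.range_smul_one_sub_sup_reachableSubspace]
  calc _ ↔ ∀ lam : ℂ, lam ≠ 0 → LinearMap.range (lam • 1 - f) ⊔ R = ⊤ := by simp only [hPBH]
    _ ↔ LinearMap.range (f ^ n) ≤ R := by
      rw [Module.End.forall_sup_range_smul_one_sub_eq_top_iff
        Module.End.reachableSubspace_le_comap, Module.finrank_fin_fun]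
    _ ↔ _ := by rw [rank_eq_rank_fromCols_iff, hR, ← toLin'_pow, toLin'_apply']
end

section
/- Let A be an n×n complex matrix and B an n×m complex matrix. Suppose x ∈ ℂ^n satisfies B* A*^i x = 0 for all natural numbers i (where M* denotes conjugate transpose), and assume that whenever a nonzero vector v satisfies A* v = λ v and B* v = 0 then λ = 0. Then A*^n x = 0. -/
/-!
The vectors `v` with `B* A*^i v = 0` for all `i` form an `A*`-invariant subspace `W` contained in
`ker B*`. By the Hautus condition, every eigenvalue of `A*` restricted to `W` is `0`; over `ℂ` this
makes the restriction nilpotent, so its `dim W`-th power, and hence its `n`-th power, vanishes.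
Since `x ∈ W`, this gives `A*^n x = 0`.
-/

open Matrix Polynomial Module

theorem IsNilpotent.pow_finrank_eq_zero {R M : Type*} [CommRing R] [IsDomain R] [AddCommGroup M]
    [Module R M] [Module.Free R M] [Module.Finite R M] {f : End R M} (hf : IsNilpotent f) :
    f ^ finrank R M = 0 := by
  simpa [hf.charpoly_eq_X_pow_finrank] using f.aeval_self_charpoly

namespace Module.End

section Unobservable

variable {R V U : Type*} [Semiring R] [AddCommMonoid V] [Module R V] [AddCommMonoid U]
  [Module R U] (f : End R V) (g : V →ₗ[R] U)

def unobservableSubspace : Submodule R V :=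
  ⨅ i : ℕ, LinearMap.ker (g ∘ₗ f ^ i)

variable {f g}

theorem mem_unobservableSubspace {v : V} :
    v ∈ unobservableSubspace f g ↔ ∀ i : ℕ, g ((f ^ i) v) = 0 := by
  simp [unobservableSubspace]

theorem unobservableSubspace_le_ker : unobservableSubspace f g ≤ LinearMap.ker g := fun v hv ↦
  by simpa using mem_unobservableSubspace.1 hv 0

theorem mapsTo_unobservableSubspace :
    ∀ v ∈ unobservableSubspace f g, f v ∈ unobservableSubspace f g := by
  intro v hv
  refine mem_unobservableSubspace.2 fun i ↦ ?_
  rw [← mul_apply, ← pow_succ]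
  exact mem_unobservableSubspace.1 hv (i + 1)

end Unobservable

variable {K V U : Type*} [Field K] [IsAlgClosed K] [AddCommGroup V] [Module K V]
  [FiniteDimensional K V] [AddCommGroup U] [Module K U]

theorem isNilpotent_of_forall_hasEigenvalue_eq_zero {f : End K V}
    (hf : ∀ μ, f.HasEigenvalue μ → μ = 0) : IsNilpotent f := by
  have hsplits := IsAlgClosed.splits f.charpoly
  have hroots : f.charpoly.roots = Multiset.replicate f.charpoly.natDegree 0 := by
    rw [hsplits.natDegree_eq_card_roots]
    exact Multiset.eq_replicate_card.2 fun μ hμ ↦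
      hf μ ((hasEigenvalue_iff_isRoot_charpoly f μ).2 (isRoot_of_mem_roots hμ))
  rw [LinearMap.isNilpotent_iff_charpoly, ← f.charpoly_natDegree,
    hsplits.eq_prod_roots_of_monic f.charpoly_monic, hroots]
  simp

theorem isNilpotent_restrict_unobservableSubspace_of_hautus {f : End K V} {g : V →ₗ[K] U}
    (hautus : ∀ (v : V) (μ : K), v ≠ 0 → f v = μ • v → g v = 0 → μ = 0) :
    IsNilpotent (f.restrict (p := unobservableSubspace f g) mapsTo_unobservableSubspace) := by
  refine isNilpotent_of_forall_hasEigenvalue_eq_zero fun μ hμ ↦ ?_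
  obtain ⟨v, hv⟩ := hμ.exists_hasEigenvector
  refine hautus v μ (by simpa using hv.2) ?_ (unobservableSubspace_le_ker v.2)
  simpa using congrArg Subtype.val hv.apply_eq_smul

theorem pow_finrank_apply_eq_zero_of_hautus {f : End K V} {g : V →ₗ[K] U}
    (hautus : ∀ (v : V) (μ : K), v ≠ 0 → f v = μ • v → g v = 0 → μ = 0)
    {x : V} (hx : ∀ i : ℕ, g ((f ^ i) x) = 0) : (f ^ finrank K V) x = 0 := by
  have hpow : (f.restrict (p := unobservableSubspace f g) mapsTo_unobservableSubspace)
      ^ finrank K V = 0 := by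
    exact pow_eq_zero_of_le (Submodule.finrank_le _)
      (isNilpotent_restrict_unobservableSubspace_of_hautus hautus).pow_finrank_eq_zero
  have hx' := LinearMap.congr_fun hpow ⟨x, mem_unobservableSubspace.2 hx⟩
  rw [pow_restrict, LinearMap.restrict_apply] at hx'
  simpa using congrArg Subtype.val hx'

end Module.End

theorem stmt3 {n m : ℕ} (A : Matrix (Fin n) (Fin n) ℂ) (B : Matrix (Fin n) (Fin m) ℂ)
    (x : Fin n → ℂ)
    (hx : ∀ i : ℕ, Bᴴ.mulVec ((Aᴴ ^ i).mulVec x) = 0)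
    (hautus : ∀ (v : Fin n → ℂ) (lam : ℂ), v ≠ 0 →
      Aᴴ.mulVec v = lam • v → Bᴴ.mulVec v = 0 → lam = 0) :
    (Aᴴ ^ n).mulVec x = 0 := by
  have := Module.End.pow_finrank_apply_eq_zero_of_hautus (f := toLin' Aᴴ) (g := toLin' Bᴴ)
    (by simpa only [toLin'_apply] using hautus) (x := x) (by simpa [← toLin'_pow] using hx)
  simpa [← toLin'_pow] using this
end

section
/- Let H, K be Hilbert spaces and let R : K → H and E : H → H be bounded linear operators. If Range(E) ⊆ Range(R), then there exists δ > 0 such that ‖R* x‖ ≥ δ ‖E* x‖ for all x ∈ H. -/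
/-!
Restricting `R` to `(ker R)ᗮ` makes it injective without changing its range, so `range E ⊆ range R`
lets us write `E = R S` with `S` linear; `S` is bounded by the closed graph theorem. Then
`E† = S† R†`, hence `‖E† x‖ ≤ ‖S†‖ ‖R† x‖`.
-/

theorem LinearMap.exists_comp_eq_of_range_le_of_injective {R M N P : Type*} [Ring R]
    [AddCommGroup M] [Module R M] [AddCommGroup N] [Module R N] [AddCommGroup P] [Module R P]
    {f : N →ₗ[R] P} {g : M →ₗ[R] P} (hf : Function.Injective f) (h : range g ≤ range f) :
    ∃ s : M →ₗ[R] N, f ∘ₗ s = g :=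
  ⟨(LinearEquiv.ofInjective f hf).symm.toLinearMap ∘ₗ g.codRestrict (range f) fun x => h ⟨x, rfl⟩,
    by ext x; simp [← LinearEquiv.ofInjective_apply (h := hf)]⟩

namespace ContinuousLinearMap

section Banach

variable {𝕜 X Y Z : Type*} [NontriviallyNormedField 𝕜]
  [NormedAddCommGroup X] [NormedSpace 𝕜 X] [CompleteSpace X]
  [NormedAddCommGroup Y] [NormedSpace 𝕜 Y] [CompleteSpace Y]
  [NormedAddCommGroup Z] [NormedSpace 𝕜 Z]

theorem exists_comp_eq_of_range_subset_of_injective {f : Y →L[𝕜] Z} {g : X →L[𝕜] Z}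
    (hf : Function.Injective f) (h : Set.range g ⊆ Set.range f) : ∃ s : X →L[𝕜] Y, f ∘L s = g := by
  obtain ⟨s, hs⟩ := LinearMap.exists_comp_eq_of_range_le_of_injective (f := (f : Y →ₗ[𝕜] Z))
    (g := (g : X →ₗ[𝕜] Z)) hf fun z hz => h hz
  have hfs (x : X) : f (s x) = g x := LinearMap.congr_fun hs x
  refine ⟨⟨s, s.continuous_of_seq_closed_graph fun u x y hu hsu => hf ?_⟩, ext hfs⟩
  rw [hfs]
  refine tendsto_nhds_unique ((f.continuous.tendsto y).comp hsu) ?_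
  simpa only [Function.comp_def, hfs] using (g.continuous.tendsto x).comp hu

end Banach

section Hilbert

variable {𝕜 X K H : Type*} [RCLike 𝕜]
  [NormedAddCommGroup K] [InnerProductSpace 𝕜 K]
  [NormedAddCommGroup H] [InnerProductSpace 𝕜 H]

theorem injective_comp_subtypeL_orthogonal_ker (f : K →L[𝕜] H) :
    Function.Injective (f ∘L f.kerᗮ.subtypeL) := by
  refine (injective_iff_map_eq_zero _).2 fun v hv => Subtype.ext ?_
  exact (Submodule.mem_bot 𝕜).1 <| (Submodule.inf_orthogonal_eq_bot _).le ⟨hv, v.2⟩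

theorem range_comp_subtypeL_orthogonal_ker [CompleteSpace K] (f : K →L[𝕜] H) :
    Set.range (f ∘L f.kerᗮ.subtypeL) = Set.range f := by
  rw [coe_comp]
  refine (Set.range_comp_subset_range _ _).antisymm ?_
  rintro _ ⟨v, rfl⟩
  refine ⟨f.kerᗮ.orthogonalProjectionOnto v, ?_⟩
  have hker : f (f.ker.starProjection v) = 0 := f.ker.starProjection_apply_mem v
  conv_rhs => rw [← f.ker.starProjection_add_starProjection_orthogonal v]
  simp [hker]

/-- Douglas' factorization lemma. -/
theorem exists_comp_eq_of_range_subset [NormedAddCommGroup X] [NormedSpace 𝕜 X] [CompleteSpace X]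
    [CompleteSpace K] {f : K →L[𝕜] H} {g : X →L[𝕜] H} (h : Set.range g ⊆ Set.range f) :
    ∃ s : X →L[𝕜] K, f ∘L s = g := by
  obtain ⟨s, hs⟩ := exists_comp_eq_of_range_subset_of_injective
    (injective_comp_subtypeL_orthogonal_ker f) (h.trans (range_comp_subtypeL_orthogonal_ker f).ge)
  exact ⟨f.kerᗮ.subtypeL ∘L s, hs⟩

theorem norm_adjoint_apply_le_of_comp_eq [NormedAddCommGroup X] [InnerProductSpace 𝕜 X]
    [CompleteSpace X] [CompleteSpace K] [CompleteSpace H] {f : K →L[𝕜] H} {g : X →L[𝕜] H}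
    {s : X →L[𝕜] K} (hfs : f ∘L s = g) (x : H) :
    ‖adjoint g x‖ ≤ ‖adjoint s‖ * ‖adjoint f x‖ := by
  rw [← hfs, adjoint_comp]
  exact (adjoint s).le_opNorm (adjoint f x)

end Hilbert

end ContinuousLinearMap

theorem stmt13 {H K : Type*}
    [NormedAddCommGroup H] [InnerProductSpace ℂ H] [CompleteSpace H]
    [NormedAddCommGroup K] [InnerProductSpace ℂ K] [CompleteSpace K]
    (R : K →L[ℂ] H) (E : H →L[ℂ] H)
    (h : Set.range E ⊆ Set.range R) :
    ∃ δ : ℝ, 0 < δ ∧ ∀ x : H,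
      δ * ‖(ContinuousLinearMap.adjoint E) x‖ ≤ ‖(ContinuousLinearMap.adjoint R) x‖ := by
  obtain ⟨S, hRS⟩ := ContinuousLinearMap.exists_comp_eq_of_range_subset h
  set c := ‖ContinuousLinearMap.adjoint S‖
  refine ⟨(c + 1)⁻¹, by positivity, fun x => ?_⟩
  rw [inv_mul_le_iff₀ (by positivity)]
  calc ‖(ContinuousLinearMap.adjoint E) x‖
      ≤ c * ‖(ContinuousLinearMap.adjoint R) x‖ :=
        ContinuousLinearMap.norm_adjoint_apply_le_of_comp_eq hRS x
    _ ≤ (c + 1) * ‖(ContinuousLinearMap.adjoint R) x‖ := by gcongr; linarith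
end

section
/- Let H, K be Hilbert spaces and R : K → H, E : H → H bounded linear operators. If there exists δ > 0 such that ‖R* x‖ ≥ δ ‖E* x‖ for all x ∈ H, then Range(E) ⊆ Range(R). -/
/-!
Let `y = E u`. The functional `z ↦ ⟪E u, z⟫ = ⟪u, E† z⟫` is bounded by
`‖u‖ ‖E† z‖ ≤ C ‖u‖ ‖R† z‖`, so it factors through `R†` as a bounded functional on the range
of `R†`. Extending it by Hahn–Banach and representing it by Riesz gives `x` with
`⟪E u, z⟫ = ⟪x, R† z⟫ = ⟪R x, z⟫` for all `z`, that is `R x = E u`.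
-/

section

open ContinuousLinearMap

variable {𝕜 : Type*} [RCLike 𝕜]

theorem LinearMap.exists_factor_through_range_of_ker_le {M N P : Type*} [AddCommGroup M] [Module 𝕜 M]
    [AddCommGroup N] [Module 𝕜 N] [AddCommGroup P] [Module 𝕜 P]
    (A : M →ₗ[𝕜] N) (φ : M →ₗ[𝕜] P) (h : LinearMap.ker A ≤ LinearMap.ker φ) :
    ∃ g : LinearMap.range A →ₗ[𝕜] P, ∀ z, g ⟨A z, LinearMap.mem_range_self A z⟩ = φ z := by
  refine ⟨(Submodule.liftQ _ φ h).comp A.quotKerEquivRange.symm.toLinearMap, fun z => ?_⟩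
  simp [LinearMap.quotKerEquivRange_symm_apply_image]

theorem exists_inner_eq_of_norm_le_mul_norm {M F : Type*} [AddCommGroup M] [Module 𝕜 M]
    [NormedAddCommGroup F] [InnerProductSpace 𝕜 F] [CompleteSpace F]
    (A : M →ₗ[𝕜] F) (φ : M →ₗ[𝕜] 𝕜) (C : ℝ) (hφ : ∀ z, ‖φ z‖ ≤ C * ‖A z‖) :
    ∃ x : F, ∀ z, φ z = inner 𝕜 x (A z) := by
  have hker : LinearMap.ker A ≤ LinearMap.ker φ := fun z hz => by
    simpa [LinearMap.mem_ker.mp hz] using hφ z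
  obtain ⟨g, hg⟩ := A.exists_factor_through_range_of_ker_le φ hker
  have hbound : ∀ w, ‖g w‖ ≤ C * ‖w‖ := by
    rintro ⟨-, z, rfl⟩
    simpa [← hg] using hφ z
  obtain ⟨f, hf, -⟩ := exists_extension_norm_eq _ (g.mkContinuous C hbound)
  refine ⟨(InnerProductSpace.toDual 𝕜 F).symm f, fun z => ?_⟩
  rw [InnerProductSpace.toDual_symm_apply, ← hg]
  exact (hf ⟨A z, LinearMap.mem_range_self A z⟩).symm

theorem range_subset_range_of_norm_adjoint_le {G H K : Type*}
    [NormedAddCommGroup G] [InnerProductSpace 𝕜 G] [CompleteSpace G]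
    [NormedAddCommGroup H] [InnerProductSpace 𝕜 H] [CompleteSpace H]
    [NormedAddCommGroup K] [InnerProductSpace 𝕜 K] [CompleteSpace K]
    (R : K →L[𝕜] H) (E : G →L[𝕜] H) (C : ℝ)
    (h : ∀ x, ‖adjoint E x‖ ≤ C * ‖adjoint R x‖) :
    Set.range E ⊆ Set.range R := by
  rintro _ ⟨u, rfl⟩
  have hφ : ∀ z, ‖innerSL 𝕜 (E u) z‖ ≤ ‖u‖ * C * ‖(adjoint R).toLinearMap z‖ := fun z => by
    rw [innerSL_apply_apply, ← adjoint_inner_right, mul_assoc]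
    exact (norm_inner_le_norm _ _).trans (mul_le_mul_of_nonneg_left (h z) (norm_nonneg u))
  obtain ⟨x, hx⟩ := exists_inner_eq_of_norm_le_mul_norm _ _ _ hφ
  refine ⟨x, ext_inner_right 𝕜 fun z => ?_⟩
  rw [← adjoint_inner_right]
  exact (hx z).symm

end

theorem stmt14 {H K : Type*}
    [NormedAddCommGroup H] [InnerProductSpace ℂ H] [CompleteSpace H]
    [NormedAddCommGroup K] [InnerProductSpace ℂ K] [CompleteSpace K]
    (R : K →L[ℂ] H) (E : H →L[ℂ] H)
    (h : ∃ δ : ℝ, 0 < δ ∧ ∀ x : H,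
      δ * ‖(ContinuousLinearMap.adjoint E) x‖ ≤ ‖(ContinuousLinearMap.adjoint R) x‖) :
    Set.range E ⊆ Set.range R := by
  obtain ⟨δ, hδ, hmaj⟩ := h
  refine range_subset_range_of_norm_adjoint_le R E δ⁻¹ fun x => ?_
  rw [← div_eq_inv_mul, le_div_iff₀ hδ, mul_comm]
  exact hmaj x
end

section
/- Let A₋₁ be an n×n complex matrix and B an n×m complex matrix such that rank[μI − A₋₁, B] = n for every nonzero μ ∈ ℂ. Then for every ω > 0 there exists an m×n matrix F₋₁ such that every eigenvalue μ of A₋₁ + B F₋₁ satisfies either μ = 0 or log|μ| < −ω. -/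
/-!
Over an algebraically closed field, controllability of every nonzero mode lets one choose the
feedback so that `A + B F` is nilpotent. If `f` has a nonzero eigenvalue `μ`, take a left
eigenvector `φ` (a functional vanishing on the range of `μ - f`); the Hautus condition at `μ`
gives `u` with `φ (g u) ≠ 0`, and the rank-one feedback `k = -(μ / φ (g u)) φ(·) u` makes `φ`
vanish on the range of `f + g k`, which therefore has a nonzero kernel. The Hautus condition is
invariant under feedback and descends to the quotient by this kernel, where induction on the
dimension supplies a nilpotent closed loop; a nilpotent map on the quotient lifts to a nilpotent
map on the whole space because the kernel is sent to zero.
-/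

open Matrix

namespace Module.End

variable {K V W : Type*} [Field K] [AddCommGroup V] [Module K V] [AddCommGroup W] [Module K W]

/-- The Hautus condition `rank [μ I - f, g] = dim V`, stated as a spanning condition. -/
def HautusAt (f : End K V) (g : W →ₗ[K] V) (μ : K) : Prop :=
  LinearMap.range (μ • 1 - f) ⊔ LinearMap.range g = ⊤

theorem HautusAt.add_comp {f : End K V} {g : W →ₗ[K] V} {μ : K} (h : HautusAt f g μ)
    (k : V →ₗ[K] W) : HautusAt (f + g ∘ₗ k) g μ := by
  have hsplit : μ • 1 - f = (μ • 1 - (f + g ∘ₗ k)) + g ∘ₗ k := by abel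
  refine eq_top_iff.2 (h ▸ sup_le ?_ le_sup_right)
  rw [hsplit]
  exact (LinearMap.range_add_le _ _).trans
    (sup_le_sup_left (LinearMap.range_comp_le_range _ _) _)

theorem HautusAt.mapQ {f : End K V} {g : W →ₗ[K] V} {μ : K} (h : HautusAt f g μ)
    (p : Submodule K V) (hp : p ≤ p.comap f) : HautusAt (p.mapQ p f hp) (p.mkQ ∘ₗ g) μ := by
  have hcomm : p.mkQ ∘ₗ (μ • 1 - f) = (μ • 1 - p.mapQ p f hp) ∘ₗ p.mkQ := by ext; simp
  have := congrArg (Submodule.map p.mkQ) h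
  rwa [Submodule.map_sup, ← LinearMap.range_comp, hcomm, ← LinearMap.range_comp,
    LinearMap.range_comp_of_range_eq_top _ p.range_mkQ, Submodule.map_top, p.range_mkQ] at this

theorem isNilpotent_of_le_ker_of_isNilpotent_mapQ {R M : Type*} [Ring R] [AddCommGroup M]
    [Module R M] {f : End R M} {p : Submodule R M} (hker : p ≤ LinearMap.ker f)
    (hf : IsNilpotent (p.mapQ p f (hker.trans (LinearMap.ker_le_comap f)))) :
    IsNilpotent f := by
  have hp : p ≤ p.comap f := hker.trans (LinearMap.ker_le_comap f)
  obtain ⟨N, hN⟩ := hf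
  refine ⟨N + 1, LinearMap.ext fun x => ?_⟩
  have hx : (f ^ N) x ∈ p := by
    have := LinearMap.congr_fun (p.mapQ_pow hp N) (Submodule.Quotient.mk x)
    rwa [hN, Submodule.mapQ_apply, LinearMap.zero_apply, Submodule.Quotient.mk_eq_zero] at this
  simpa [pow_succ'] using hker hx

theorem exists_ker_add_comp_ne_bot [IsAlgClosed K] [FiniteDimensional K V] [Nontrivial V]
    {f : End K V} {g : W →ₗ[K] V} (h : ∀ μ ≠ 0, HautusAt f g μ) :
    ∃ k : V →ₗ[K] W, LinearMap.ker (f + g ∘ₗ k) ≠ ⊥ := by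
  obtain ⟨μ, hμ⟩ := exists_eigenvalue f
  obtain ⟨v, hv⟩ := hμ.exists_hasEigenvector
  by_cases hμ0 : μ = 0
  · refine ⟨0, (Submodule.ne_bot_iff _).2 ⟨v, ?_, hv.2⟩⟩
    simp [hv.apply_eq_smul, hμ0]
  have hrange : LinearMap.range (μ • 1 - f) < ⊤ := by
    refine lt_top_iff_ne_top.2 fun htop => ?_
    refine (Submodule.ne_bot_iff _).2 ⟨v, ?_, hv.2⟩ (LinearMap.ker_eq_bot_iff_range_eq_top.2 htop)
    simp [hv.apply_eq_smul]
  obtain ⟨φ, hφ0, hφ⟩ := (LinearMap.range (μ • 1 - f)).exists_le_ker_of_lt_top hrange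
  have hφf : ∀ x, φ (f x) = μ * φ x := fun x => by
    have : μ * φ x = φ (f x) := by simpa [sub_eq_zero] using hφ ⟨x, rfl⟩
    exact this.symm
  obtain ⟨u, hu⟩ : ∃ u, φ (g u) ≠ 0 := by
    by_contra! hg
    refine hφ0 (LinearMap.ker_eq_top.1 (eq_top_iff.2 ?_))
    rw [← h μ hμ0]
    exact sup_le hφ (by rintro _ ⟨u, rfl⟩; exact hg u)
  set k : V →ₗ[K] W := (-(μ / φ (g u))) • φ.smulRight u
  have hφk : ∀ x, φ ((f + g ∘ₗ k) x) = 0 := fun x => by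
    simp only [k, LinearMap.add_apply, LinearMap.comp_apply, LinearMap.smul_apply,
      LinearMap.smulRight_apply, map_add, map_smul, hφf, smul_eq_mul]
    field_simp
    ring
  refine ⟨k, fun hker => hφ0 (LinearMap.ext fun y => ?_)⟩
  obtain ⟨x, rfl⟩ := LinearMap.range_eq_top.1 (LinearMap.ker_eq_bot_iff_range_eq_top.1 hker) y
  exact hφk x

theorem exists_isNilpotent_add_comp [IsAlgClosed K] [FiniteDimensional K V]
    {f : End K V} {g : W →ₗ[K] V} (h : ∀ μ ≠ 0, HautusAt f g μ) :
    ∃ k : V →ₗ[K] W, IsNilpotent (f + g ∘ₗ k) := by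
  induction hd : Module.finrank K V using Nat.strong_induction_on generalizing V with
  | _ d ih =>
  rcases subsingleton_or_nontrivial V with hV | hV
  · exact ⟨0, 1, Subsingleton.elim _ _⟩
  obtain ⟨k₁, hk₁⟩ := exists_ker_add_comp_ne_bot h
  set f₁ := f + g ∘ₗ k₁
  set p := LinearMap.ker f₁
  have hp : p ≤ p.comap f₁ := LinearMap.ker_le_comap f₁
  have hdim : Module.finrank K (V ⧸ p) < d := by
    rw [← hd, f₁.quotKerEquivRange.finrank_eq]
    exact Submodule.finrank_lt fun htop => hk₁ (LinearMap.ker_eq_bot_iff_range_eq_top.2 htop)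
  obtain ⟨k₂, hk₂⟩ := ih _ hdim (fun μ hμ => ((h μ hμ).add_comp k₁).mapQ p hp) rfl
  set f₂ := f + g ∘ₗ (k₁ + k₂ ∘ₗ p.mkQ)
  have hker : p ≤ LinearMap.ker f₂ := fun x hx => by
    have hx' : f₁ x = 0 := hx
    have hq : p.mkQ x = 0 := (Submodule.Quotient.mk_eq_zero p).2 hx
    simpa [f₂, f₁, add_assoc, hq] using hx'
  refine ⟨k₁ + k₂ ∘ₗ p.mkQ, isNilpotent_of_le_ker_of_isNilpotent_mapQ hker ?_⟩
  convert hk₂ using 1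
  ext x
  simp [f₁, add_assoc]

end Module.End

namespace Matrix

theorem range_mulVecLin_fromCols_s15 {R l m n : Type*} [CommSemiring R] [Fintype m] [Fintype n]
    (A₁ : Matrix l m R) (A₂ : Matrix l n R) :
    LinearMap.range (fromCols A₁ A₂).mulVecLin =
      LinearMap.range A₁.mulVecLin ⊔ LinearMap.range A₂.mulVecLin := by
  have : (fromCols A₁ A₂).mulVecLin = A₁.mulVecLin.coprod A₂.mulVecLin ∘ₗ
      (LinearEquiv.sumArrowLequivProdArrow m n R R).toLinearMap := by
    ext v : 1
    simp only [mulVecBilin_apply, fromCols_mulVec, Function.comp_def, LinearMap.coe_comp,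
      LinearEquiv.coe_coe, Function.comp_apply, LinearMap.coprod_apply]
    rfl
  rw [this, LinearMap.range_comp_of_range_eq_top _ (LinearEquiv.range _), LinearMap.range_coprod]

theorem hautusAt_mulVecLin_of_rank_fromCols_eq {K l m : Type*} [Field K] [Fintype l] [Fintype m]
    [DecidableEq l] {A : Matrix l l K} {B : Matrix l m K} {μ : K}
    (h : (fromCols (μ • 1 - A) B).rank = Fintype.card l) :
    Module.End.HautusAt A.mulVecLin B.mulVecLin μ := by
  have := Submodule.eq_top_of_finrank_eq (h.trans (Module.finrank_fintype_fun_eq_card K).symm)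
  have hsub : (μ • 1 - A).mulVecLin = μ • 1 - A.mulVecLin := by
    simp only [map_sub, map_smul, mulVecLin_one]
    rfl
  rwa [range_mulVecLin_fromCols_s15, hsub] at this

theorem eq_zero_of_isNilpotent_of_det_smul_one_sub_eq_zero {K n : Type*} [Field K] [Fintype n]
    [DecidableEq n] {M : Matrix n n K} (hM : IsNilpotent M) {μ : K}
    (h : (μ • 1 - M).det = 0) : μ = 0 := by
  by_contra hμ
  have hunit : IsUnit (1 - μ⁻¹ • M) := (hM.smul μ⁻¹).isUnit_one_sub
  have hfactor : μ • 1 - M = μ • (1 - μ⁻¹ • M) := by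
    rw [smul_sub, smul_smul, mul_inv_cancel₀ hμ, one_smul]
  rw [hfactor, det_smul] at h
  exact mul_ne_zero (pow_ne_zero _ hμ) ((isUnit_iff_isUnit_det _).1 hunit).ne_zero h

end Matrix

theorem stmt15 {n m : ℕ} (A : Matrix (Fin n) (Fin n) ℂ) (B : Matrix (Fin n) (Fin m) ℂ)
    (h : ∀ μ : ℂ, μ ≠ 0 →
      (Matrix.fromCols (μ • (1 : Matrix (Fin n) (Fin n) ℂ) - A) B).rank = n) :
    ∀ ω : ℝ, 0 < ω → ∃ F : Matrix (Fin m) (Fin n) ℂ,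
      ∀ μ : ℂ, (μ • (1 : Matrix (Fin n) (Fin n) ℂ) - (A + B * F)).det = 0 →
        μ = 0 ∨ Real.log (‖μ‖) < -ω := by
  intro _ _
  have hH : ∀ μ ≠ 0, Module.End.HautusAt A.mulVecLin B.mulVecLin μ := fun μ hμ =>
    hautusAt_mulVecLin_of_rank_fromCols_eq (by simpa using h μ hμ)
  obtain ⟨k, hk⟩ := Module.End.exists_isNilpotent_add_comp hH
  have hF : IsNilpotent (A + B * LinearMap.toMatrix' k) := by
    rw [← isNilpotent_toLin'_iff, map_add, toLin'_mul, toLin'_toMatrix']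
    exact hk
  exact ⟨LinearMap.toMatrix' k, fun μ hμ =>
    Or.inl (eq_zero_of_isNilpotent_of_det_smul_one_sub_eq_zero hF hμ)⟩
end
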